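/- arXiv:1910.00667 — 6 statements merged into one kernel-verified Lean document; each statement's English description precedes it below -/
import Mathlib

section
/- If A is a symmetric n×n matrix and B is positive semidefinite, then ‖A‖ · (I ⊙ B) − A ⊙ B is positive semidefinite, where ‖A‖ is the operator norm, I the identity matrix, and ⊙ the Hadamard product. (Note I ⊙ B is the diagonal of B.) -/
/-!
For symmetric `A` the spectrum of `A` lies in `[-‖A‖, ‖A‖]`, so `‖A‖ • 1 - A` is positive
semidefinite. The Schur product theorem then makes `(‖A‖ • 1 - A) ⊙ B` positive semidefinite,
and this Hadamard product is `‖A‖ • (1 ⊙ B) - A ⊙ B`.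
-/

open Matrix
open scoped Matrix.Norms.L2Operator MatrixOrder ComplexOrder

theorem Matrix.sub_hadamard {m n α : Type*} [NonUnitalNonAssocRing α] (A B C : Matrix m n α) :
    (A - B) ⊙ C = A ⊙ C - B ⊙ C := by
  ext i j
  exact sub_mul (A i j) (B i j) (C i j)

theorem Matrix.IsHermitian.posSemidef_l2_opNorm_smul_one_sub {𝕜 n : Type*} [RCLike 𝕜]
    [Fintype n] [DecidableEq n] {A : Matrix n n 𝕜} (hA : A.IsHermitian) :
    (‖A‖ • (1 : Matrix n n 𝕜) - A).PosSemidef := by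
  have hle : A ≤ algebraMap ℝ (Matrix n n 𝕜) ‖A‖ := by
    refine le_algebraMap_of_spectrum_le (fun r hr => ?_) hA
    cases isEmpty_or_nonempty n
    · simp [spectrum.of_subsingleton] at hr
    · rw [← spectrum.algebraMap_mem_iff 𝕜] at hr
      calc r ≤ ‖(r : 𝕜)‖ := by simpa using Real.le_norm_self r
        _ ≤ ‖A‖ := spectrum.norm_le_norm_of_mem hr
  rwa [Algebra.algebraMap_eq_smul_one] at hle

/-- If `A` is symmetric and `B` positive semidefinite, then
`‖A‖ • (I ⊙ B) − A ⊙ B` is positive semidefinite, where `‖A‖` is the operator norm. -/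
theorem hadamard_opNorm_diag_posSemidef {n : ℕ} (A B : Matrix (Fin n) (Fin n) ℝ)
    (hA : A.IsSymm) (hB : B.PosSemidef) :
    (‖A‖ • ((1 : Matrix (Fin n) (Fin n) ℝ) ⊙ B) - A ⊙ B).PosSemidef := by
  have hC : (‖A‖ • (1 : Matrix (Fin n) (Fin n) ℝ) - A).PosSemidef :=
    (isHermitian_iff_isSymm.mpr hA).posSemidef_l2_opNorm_smul_one_sub
  rw [← smul_hadamard, ← sub_hadamard]
  exact hC.hadamard hB
end

section
/- Under the MCAR model with δ^(k) i.i.d., independent of x^(k), if P̂_{ij} > 0 for all i,j (every pair of coordinates is jointly observed at least once), then the empirically-normalized estimator Σ̂ = (1/N) Σ_k y^(k) y^(k)ᵀ ⊙ Γ̂ is an unbiased estimator of Σ: E[Σ̂] = Σ. -/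
/-!
Write `P̂ᵢⱼ = N⁻¹ ∑ₗ δₗᵢ δₗⱼ`. The `(i, j)` entry of `Σ̂` is `∑ₖ xₖᵢ xₖⱼ wₖ` with weights
`wₖ = δₖᵢ δₖⱼ / ∑ₗ δₗᵢ δₗⱼ`: the factors `N⁻¹` cancel. The weights are functions of the missingness
patterns alone, hence independent of the data, and they are nonnegative with sum `1`. So
`E[xₖᵢ xₖⱼ wₖ] = Σᵢⱼ E[wₖ]`, and summing over `k` gives `Σᵢⱼ E[∑ₖ wₖ] = Σᵢⱼ`.
-/

open MeasureTheory ProbabilityTheory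

section RandomConvexCombination

variable {Ω ι : Type*} [MeasurableSpace Ω] {μ : Measure Ω} [Fintype ι]

lemma abs_le_one_of_nonneg_of_sum_eq_one {w : ι → ℝ} (hw0 : ∀ k, 0 ≤ w k)
    (hw1 : ∑ k, w k = 1) (k : ι) : |w k| ≤ 1 := by
  rw [abs_of_nonneg (hw0 k), ← hw1]
  exact Finset.single_le_sum (fun l _ => hw0 l) (Finset.mem_univ k)

theorem integral_sum_mul_eq_of_indepFun [IsProbabilityMeasure μ] {f w : ι → Ω → ℝ} {c : ℝ}
    (hf : ∀ k, Integrable (f k) μ) (hfc : ∀ k, ∫ ω, f k ω ∂μ = c)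
    (hw : ∀ k, AEStronglyMeasurable (w k) μ) (hw0 : ∀ k ω, 0 ≤ w k ω)
    (hw1 : ∀ ω, ∑ k, w k ω = 1) (hind : ∀ k, IndepFun (f k) (w k) μ) :
    ∫ ω, ∑ k, f k ω * w k ω ∂μ = c := by
  have hbound : ∀ k, ∀ᵐ ω ∂μ, ‖w k ω‖ ≤ 1 := fun k =>
    .of_forall fun ω => abs_le_one_of_nonneg_of_sum_eq_one (hw0 · ω) (hw1 ω) k
  have hw_int : ∀ k, Integrable (w k) μ := fun k => .of_bound (hw k) 1 (hbound k)
  have hfw_int : ∀ k, Integrable (fun ω => f k ω * w k ω) μ := fun k =>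
    (hf k).mul_bdd (hw k) (hbound k)
  have hfw_mean : ∀ k, ∫ ω, f k ω * w k ω ∂μ = c * ∫ ω, w k ω ∂μ := fun k => by
    rw [← hfc k]
    exact (hind k).integral_mul_eq_mul_integral (hf k).aestronglyMeasurable (hw k)
  calc ∫ ω, ∑ k, f k ω * w k ω ∂μ = ∑ k, c * ∫ ω, w k ω ∂μ := by
        rw [integral_finsetSum _ fun k _ => hfw_int k]
        exact Finset.sum_congr rfl fun k _ => hfw_mean k
    _ = c * ∫ ω, ∑ k, w k ω ∂μ := by
        rw [integral_finsetSum _ fun k _ => hw_int k, Finset.mul_sum]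
    _ = c := by simp [hw1]

end RandomConvexCombination

/-- Also for `N = 0`, where both sides are empty sums. -/
lemma inv_mul_sum_mul_inv_inv_mul_sum {N : ℕ} (g : Fin N → ℝ) (H : ℝ) :
    (N : ℝ)⁻¹ * ∑ k, g k * ((N : ℝ)⁻¹ * H)⁻¹ = ∑ k, g k / H := by
  rcases N.eq_zero_or_pos with rfl | hN
  · simp
  · rw [← Finset.sum_mul, ← Finset.sum_div, mul_inv, inv_inv, div_eq_mul_inv]
    field_simp

section JointObsWeight

variable {N n : ℕ} (i j : Fin n)

noncomputable def jointObsWeight (d : Fin N → Fin n → ℝ) (k : Fin N) : ℝ :=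
  d k i * d k j / ∑ l, d l i * d l j

lemma measurable_jointObsWeight (k : Fin N) : Measurable fun d => jointObsWeight i j d k := by
  unfold jointObsWeight
  fun_prop

lemma jointObsWeight_nonneg {d : Fin N → Fin n → ℝ} (hd : ∀ l a, 0 ≤ d l a) (k : Fin N) :
    0 ≤ jointObsWeight i j d k :=
  div_nonneg (mul_nonneg (hd k i) (hd k j))
    (Finset.sum_nonneg fun l _ => mul_nonneg (hd l i) (hd l j))

lemma sum_jointObsWeight {d : Fin N → Fin n → ℝ} (hd : ∑ l, d l i * d l j ≠ 0) :
    ∑ k, jointObsWeight i j d k = 1 := by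
  simp only [jointObsWeight]
  rw [← Finset.sum_div, div_self hd]

end JointObsWeight

theorem mcar_empirical_prob_unbiased_general {Ω : Type*} [MeasureSpace Ω]
    (μ : Measure Ω) [IsProbabilityMeasure μ] {n N : ℕ}
    (x δ : Fin N → Ω → Fin n → ℝ)
    (S : Matrix (Fin n) (Fin n) ℝ)
    (hδm : ∀ k, Measurable (δ k))
    -- the whole collection of missing-data patterns is independent of the whole data
    (hind : IndepFun (fun ω k => x k ω) (fun ω k => δ k ω) μ)
    (hδ01 : ∀ k ω i, δ k ω i = 0 ∨ δ k ω i = 1)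
    (hcov : ∀ k i j, ∫ ω, x k ω i * x k ω j ∂μ = S i j)
    (hcov_int : ∀ k i j, Integrable (fun ω => x k ω i * x k ω j) μ)
    -- all pairs of coordinates are jointly observed at least once
    (hPpos : ∀ ω i j, 0 < (N : ℝ)⁻¹ * ∑ k, δ k ω i * δ k ω j) :
    ∀ i j, ∫ ω, (N : ℝ)⁻¹ * ∑ k, (δ k ω i * x k ω i) * (δ k ω j * x k ω j) *
        ((N : ℝ)⁻¹ * ∑ l, δ l ω i * δ l ω j)⁻¹ ∂μ = S i j := by
  intro i j
  have hδ0 : ∀ k ω i, 0 ≤ δ k ω i := fun k ω i => by rcases hδ01 k ω i with h | h <;> simp [h]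
  have hpattern_pos : ∀ ω, 0 < ∑ l, δ l ω i * δ l ω j := fun ω =>
    pos_of_mul_pos_right (hPpos ω i j) (by positivity)
  have hestimator : ∀ ω, (N : ℝ)⁻¹ * ∑ k, (δ k ω i * x k ω i) * (δ k ω j * x k ω j) *
      ((N : ℝ)⁻¹ * ∑ l, δ l ω i * δ l ω j)⁻¹ =
      ∑ k, x k ω i * x k ω j * jointObsWeight i j (fun l => δ l ω) k := by
    intro ω
    rw [inv_mul_sum_mul_inv_inv_mul_sum]
    exact Finset.sum_congr rfl fun k _ => by simp only [jointObsWeight]; ring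
  simp_rw [hestimator]
  refine integral_sum_mul_eq_of_indepFun (fun k => hcov_int k i j) (fun k => hcov k i j)
    (fun k => ((measurable_jointObsWeight i j k).comp
      (measurable_pi_lambda _ hδm)).aestronglyMeasurable)
    (fun k ω => jointObsWeight_nonneg i j (hδ0 · ω) k)
    (fun ω => sum_jointObsWeight i j (hpattern_pos ω).ne') (fun k => ?_)
  exact hind.comp (by fun_prop : Measurable fun v : Fin N → Fin n → ℝ => v k i * v k j)
    (measurable_jointObsWeight i j k)

/-- Under the MCAR model, if the empirical joint observation probabilities
`P̂ ω i j = (1/N) ∑ₖ δ⁽ᵏ⁾ᵢ δ⁽ᵏ⁾ⱼ` are positive (every pair jointly observed at least once),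
then the empirically-normalized estimator
`Σ̂ = (1/N) ∑ₖ y⁽ᵏ⁾ y⁽ᵏ⁾ᵀ ⊙ Γ̂`, with `Γ̂` the entrywise inverse of `P̂`, is unbiased. -/
theorem mcar_empirical_prob_unbiased {Ω : Type*} [MeasureSpace Ω]
    (μ : Measure Ω) [IsProbabilityMeasure μ] {n N : ℕ} (hN : 0 < N)
    (x δ : Fin N → Ω → Fin n → ℝ)
    (S : Matrix (Fin n) (Fin n) ℝ)
    (hxm : ∀ k, Measurable (x k)) (hδm : ∀ k, Measurable (δ k))
    -- the whole collection of missing-data patterns is independent of the whole data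
    (hind : IndepFun (fun ω k => x k ω) (fun ω k => δ k ω) μ)
    (hδ01 : ∀ k ω i, δ k ω i = 0 ∨ δ k ω i = 1)
    (hiid : ∀ k l, Measure.map (x k) μ = Measure.map (x l) μ)
    (hmean : ∀ k i, ∫ ω, x k ω i ∂μ = 0)
    (hcov : ∀ k i j, ∫ ω, x k ω i * x k ω j ∂μ = S i j)
    (hcov_int : ∀ k i j, Integrable (fun ω => x k ω i * x k ω j) μ)
    -- all pairs of coordinates are jointly observed at least once
    (hPpos : ∀ ω i j, 0 < (N : ℝ)⁻¹ * ∑ k, δ k ω i * δ k ω j) :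
    ∀ i j, ∫ ω, (N : ℝ)⁻¹ * ∑ k, (δ k ω i * x k ω i) * (δ k ω j * x k ω j) *
        ((N : ℝ)⁻¹ * ∑ l, δ l ω i * δ l ω j)⁻¹ ∂μ = S i j :=
  mcar_empirical_prob_unbiased_general μ x δ S hδm hind hδ01 hcov hcov_int hPpos
end

section
/- Suppose x is a random vector in R^n satisfying: (i) there is c > 0 with E[|uᵀx|^r]^{1/r} ≤ c ‖uᵀx‖_{Ψ₂} √r for all unit vectors u and r ≥ 1, and (ii) there is c₀ > 0 with c₀ ‖uᵀx‖_{Ψ₂}² ≤ E[(uᵀx)²] for all u. Then for each coordinate i, ‖E[x_i² x xᵀ]‖ ≤ (4c²/c₀)² Σ_{ii} ‖Σ‖, where Σ = E[x xᵀ] and ‖·‖ is the operator norm. -/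
/-!
Condition (i) at `r = 4` together with (ii) gives, for every unit vector `u`, the reverse Hölder
bound `√E[(uᵀx)⁴] ≤ K E[(uᵀx)²] = K uᵀΣu` with `K = 4c²/c₀`. The matrix `M = E[xᵢ² x xᵀ]` is
positive semidefinite, so `‖M‖` is the largest value of `uᵀMu = E[xᵢ² (uᵀx)²]` on unit vectors, and
Cauchy–Schwarz bounds this by `√E[xᵢ⁴] √E[(uᵀx)⁴] ≤ (K Σᵢᵢ) (K ‖Σ‖)`.
-/

open MeasureTheory Matrix
open scoped Matrix.Norms.L2Operator

/-- The sub-Gaussian `Ψ₂` norm: `inf {u > 0 : E[exp(z²/u²)] ≤ 2}`. -/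
noncomputable def psi2Norm {Ω : Type*} [MeasureSpace Ω] (μ : Measure Ω) (z : Ω → ℝ) : ℝ :=
  sInf {u : ℝ | 0 < u ∧ ∫ ω, Real.exp (z ω ^ 2 / u ^ 2) ∂μ ≤ 2}

theorem ContinuousLinearMap.opNorm_le_of_isSymmetric {𝕜 E : Type*} [RCLike 𝕜]
    [NormedAddCommGroup E] [InnerProductSpace 𝕜 E] {T : E →L[𝕜] E}
    (hT : (T : E →ₗ[𝕜] E).IsSymmetric) {C : ℝ} (hC : 0 ≤ C)
    (h : ∀ x, ‖x‖ = 1 → |RCLike.re (inner 𝕜 (T x) x)| ≤ C) : ‖T‖ ≤ C := by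
  rw [T.norm_eq_iSup_rayleighQuotient hT]
  refine ciSup_le fun x => ?_
  rcases eq_or_ne x 0 with rfl | hx
  · simpa using hC
  have hunit : ‖((‖x‖⁻¹ : ℝ) : 𝕜) • x‖ = 1 := by simp [norm_smul, hx]
  rw [← T.rayleigh_smul x (c := ((‖x‖⁻¹ : ℝ) : 𝕜)) (by simp [hx]), rayleighQuotient, hunit,
    one_pow, div_one]
  exact h _ hunit

namespace Matrix

variable {ι : Type*} [Fintype ι] [DecidableEq ι]

theorem dotProduct_mulVec_le_l2_opNorm (A : Matrix ι ι ℝ) {v : ι → ℝ}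
    (hv : ∑ j, v j ^ 2 = 1) : v ⬝ᵥ A *ᵥ v ≤ ‖A‖ := by
  set T := toEuclideanCLM (n := ι) (𝕜 := ℝ) A
  set y := WithLp.toLp 2 v
  have hy : ‖y‖ = 1 := by simp [y, EuclideanSpace.norm_eq, hv]
  calc v ⬝ᵥ A *ᵥ v = inner ℝ y (T y) := (inner_toEuclideanCLM A y y).symm
    _ ≤ ‖y‖ * ‖T y‖ := real_inner_le_norm y (T y)
    _ ≤ ‖y‖ * (‖T‖ * ‖y‖) := by gcongr; exact T.le_opNorm y
    _ = ‖A‖ := by rw [hy, one_mul, mul_one, l2_opNorm_toEuclideanCLM]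

theorem PosSemidef.l2_opNorm_le {A : Matrix ι ι ℝ} (hA : A.PosSemidef) {C : ℝ} (hC : 0 ≤ C)
    (h : ∀ v : ι → ℝ, ∑ j, v j ^ 2 = 1 → v ⬝ᵥ A *ᵥ v ≤ C) : ‖A‖ ≤ C := by
  rw [← l2_opNorm_toEuclideanCLM]
  refine ContinuousLinearMap.opNorm_le_of_isSymmetric ?_ hC fun x hx => ?_
  · rw [coe_toEuclideanCLM_eq_toEuclideanLin]
    exact isSymmetric_toEuclideanLin_iff.mpr hA.isHermitian
  · have hq : inner ℝ (toEuclideanCLM (n := ι) (𝕜 := ℝ) A x) x = x.ofLp ⬝ᵥ A *ᵥ x.ofLp := by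
      rw [real_inner_comm, inner_toEuclideanCLM]
    rw [RCLike.re_to_real, hq, abs_of_nonneg (by simpa using hA.dotProduct_mulVec_nonneg x.ofLp)]
    exact h _ (by rw [← EuclideanSpace.real_norm_sq_eq, hx, one_pow])

end Matrix

namespace MeasureTheory

variable {Ω : Type*} [MeasurableSpace Ω] {μ : Measure Ω} {ι : Type*} [Fintype ι]

noncomputable def weightedSecondMoment (μ : Measure Ω) (w : Ω → ℝ) (z : Ω → ι → ℝ) :
    Matrix ι ι ℝ :=
  Matrix.of fun j l => ∫ ω, w ω * (z ω j * z ω l) ∂μ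

theorem dotProduct_weightedSecondMoment_mulVec {w : Ω → ℝ} {z : Ω → ι → ℝ}
    (hint : ∀ j l, Integrable (fun ω => w ω * (z ω j * z ω l)) μ) (v : ι → ℝ) :
    v ⬝ᵥ weightedSecondMoment μ w z *ᵥ v = ∫ ω, w ω * (v ⬝ᵥ z ω) ^ 2 ∂μ := by
  have hexpand : ∀ ω, w ω * (v ⬝ᵥ z ω) ^ 2
      = ∑ j, ∑ l, v j * v l * (w ω * (z ω j * z ω l)) := fun ω => by
    rw [dotProduct, sq, Finset.sum_mul_sum, Finset.mul_sum]
    refine Finset.sum_congr rfl fun j _ => ?_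
    rw [Finset.mul_sum]
    exact Finset.sum_congr rfl fun l _ => by ring
  simp only [hexpand]
  rw [integral_finsetSum _ fun j _ => integrable_finsetSum _ fun l _ => (hint j l).const_mul _]
  refine Finset.sum_congr rfl fun j _ => ?_
  rw [integral_finsetSum _ fun l _ => (hint j l).const_mul _, mulVec, dotProduct, Finset.mul_sum]
  refine Finset.sum_congr rfl fun l _ => ?_
  rw [integral_const_mul, weightedSecondMoment, of_apply]
  ring

theorem posSemidef_weightedSecondMoment {w : Ω → ℝ} {z : Ω → ι → ℝ} (hw : 0 ≤ᵐ[μ] w)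
    (hint : ∀ j l, Integrable (fun ω => w ω * (z ω j * z ω l)) μ) :
    (weightedSecondMoment μ w z).PosSemidef := by
  refine .of_dotProduct_mulVec_nonneg ?_ fun v => ?_
  · ext j l
    simp only [conjTranspose_apply, star_trivial, weightedSecondMoment, of_apply, mul_comm (z _ l)]
  · rw [star_trivial, dotProduct_weightedSecondMoment_mulVec hint]
    exact integral_nonneg_of_ae (hw.mono fun ω hω => mul_nonneg hω (sq_nonneg _))

theorem memLp_of_integrable_pow {f : Ω → ℝ} {n : ℕ} (hn : n ≠ 0)
    (hf : AEStronglyMeasurable f μ) (h : Integrable (fun ω => f ω ^ n) μ) : MemLp f n μ := by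
  rw [← integrable_norm_rpow_iff hf (by exact_mod_cast hn) (by simp)]
  simpa [norm_pow] using h.norm

theorem MemLp.sq {f : Ω → ℝ} {p : ENNReal} (hf : MemLp f p μ) :
    MemLp (fun ω => f ω ^ 2) (p / 2) μ := by
  simpa using hf.norm_rpow_div 2

theorem integral_sq_mul_sq_le {f g : Ω → ℝ} (hf : MemLp f 4 μ) (hg : MemLp g 4 μ) :
    ∫ ω, f ω ^ 2 * g ω ^ 2 ∂μ ≤ √(∫ ω, f ω ^ 4 ∂μ) * √(∫ ω, g ω ^ 4 ∂μ) := by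
  have h42 : (4 : ENNReal) / 2 = ENNReal.ofReal 2 := by
    rw [eq_comm, ENNReal.eq_div_iff (by norm_num) (by norm_num)]; norm_num
  have hroot : ∀ h : Ω → ℝ,
      (∫ ω, (h ω ^ 2) ^ (2 : ℝ) ∂μ) ^ (1 / (2 : ℝ)) = √(∫ ω, h ω ^ 4 ∂μ) := fun h => by
    rw [Real.sqrt_eq_rpow]
    congr 1
    exact integral_congr_ae (ae_of_all _ fun ω => by simp [← pow_mul])
  rw [← hroot f, ← hroot g]
  exact integral_mul_le_Lp_mul_Lq_of_nonneg Real.HolderConjugate.two_two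
    (ae_of_all _ fun ω => sq_nonneg (f ω)) (ae_of_all _ fun ω => sq_nonneg (g ω))
    (h42 ▸ hf.sq) (h42 ▸ hg.sq)

theorem sqrt_integral_pow_four_le {Y : Ω → ℝ} {c c₀ ψ : ℝ} (hc₀ : 0 < c₀)
    (hmom : (∫ ω, |Y ω| ^ (4 : ℝ) ∂μ) ^ (1 / (4 : ℝ)) ≤ c * ψ * √4)
    (hlow : c₀ * ψ ^ 2 ≤ ∫ ω, Y ω ^ 2 ∂μ) :
    √(∫ ω, Y ω ^ 4 ∂μ) ≤ 4 * c ^ 2 / c₀ * ∫ ω, Y ω ^ 2 ∂μ := by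
  have habs : ∫ ω, |Y ω| ^ (4 : ℝ) ∂μ = ∫ ω, Y ω ^ 4 ∂μ :=
    integral_congr_ae (ae_of_all _ fun ω => by simp [Even.pow_abs ⟨2, rfl⟩])
  have h4 : 0 ≤ ∫ ω, Y ω ^ 4 ∂μ := integral_nonneg fun ω => by positivity
  set m := (∫ ω, Y ω ^ 4 ∂μ) ^ (1 / (4 : ℝ)) with hm
  have hm0 : 0 ≤ m := Real.rpow_nonneg h4 _
  have hsqrt : √(∫ ω, Y ω ^ 4 ∂μ) = m ^ 2 := by
    rw [Real.sqrt_eq_rpow, hm, ← Real.rpow_natCast, ← Real.rpow_mul h4]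
    norm_num
  have hm2 : m ≤ 2 * c * ψ := by
    rw [hm, ← habs]
    convert hmom using 1
    rw [show (4 : ℝ) = 2 ^ 2 by norm_num, Real.sqrt_sq zero_le_two]
    ring
  calc √(∫ ω, Y ω ^ 4 ∂μ) = m ^ 2 := hsqrt
    _ ≤ (2 * c * ψ) ^ 2 := pow_le_pow_left₀ hm0 hm2 2
    _ = 4 * c ^ 2 / c₀ * (c₀ * ψ ^ 2) := by field_simp; ring
    _ ≤ 4 * c ^ 2 / c₀ * ∫ ω, Y ω ^ 2 ∂μ := by gcongr

end MeasureTheory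

theorem fourth_moment_matrix_opNorm_bound_general {Ω : Type*} [MeasureSpace Ω]
    (μ : Measure Ω) [IsProbabilityMeasure μ] {n : ℕ}
    (x : Ω → Fin n → ℝ) (hxm : Measurable x)
    (c c₀ : ℝ) (hc₀ : 0 < c₀)
    (hmom : ∀ u : Fin n → ℝ, (∑ i, u i ^ 2 = 1) → ∀ r : ℝ, 1 ≤ r →
      (∫ ω, |∑ i, u i * x ω i| ^ r ∂μ) ^ (1 / r)
        ≤ c * psi2Norm μ (fun ω => ∑ i, u i * x ω i) * Real.sqrt r)
    (hlow : ∀ u : Fin n → ℝ,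
      c₀ * psi2Norm μ (fun ω => ∑ i, u i * x ω i) ^ 2
        ≤ ∫ ω, (∑ i, u i * x ω i) ^ 2 ∂μ)
    (S : Matrix (Fin n) (Fin n) ℝ)
    (hS : ∀ i j, S i j = ∫ ω, x ω i * x ω j ∂μ)
    (hint4 : ∀ i j l, Integrable (fun ω => x ω i ^ 2 * (x ω j * x ω l)) μ)
    (i : Fin n)
    (M : Matrix (Fin n) (Fin n) ℝ)
    (hM : ∀ j l, M j l = ∫ ω, x ω i ^ 2 * (x ω j * x ω l) ∂μ) :
    ‖M‖ ≤ (4 * c ^ 2 / c₀) ^ 2 * S i i * ‖S‖ := by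
  set K := 4 * c ^ 2 / c₀
  have hx : ∀ j, MemLp (fun ω => x ω j) 4 μ := fun j =>
    memLp_of_integrable_pow four_ne_zero hxm.eval.aestronglyMeasurable
      ((hint4 j j j).congr (ae_of_all _ fun ω => by ring))
  have hSint : ∀ j l, Integrable (fun ω => (1 : Ω → ℝ) ω * (x ω j * x ω l)) μ := fun j l => by
    simp only [Pi.one_apply, one_mul]
    exact ((hx j).mono_exponent (p := 2) (by norm_num)).integrable_mul
      ((hx l).mono_exponent (p := 2) (by norm_num))
  have hSw : S = weightedSecondMoment μ 1 x := by
    ext j l; simp [weightedSecondMoment, hS]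
  have hMw : M = weightedSecondMoment μ (fun ω => x ω i ^ 2) x := by
    ext j l; exact hM j l
  have hreverse : ∀ u : Fin n → ℝ, ∑ j, u j ^ 2 = 1 →
      √(∫ ω, (u ⬝ᵥ x ω) ^ 4 ∂μ) ≤ K * (u ⬝ᵥ S *ᵥ u) := fun u hu => by
    rw [hSw, dotProduct_weightedSecondMoment_mulVec hSint]
    simpa only [Pi.one_apply, one_mul] using
      sqrt_integral_pow_four_le (Y := fun ω => u ⬝ᵥ x ω) hc₀ (hmom u hu 4 (by norm_num)) (hlow u)
  have hcoord : √(∫ ω, x ω i ^ 4 ∂μ) ≤ K * S i i := by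
    simpa [single_one_dotProduct] using hreverse (Pi.single i 1)
      (by rw [Fintype.sum_eq_single i fun j hj => by simp [hj]]; simp)
  have hSii : 0 ≤ S i i :=
    (hSw ▸ posSemidef_weightedSecondMoment (ae_of_all _ fun _ => zero_le_one) hSint).diag_nonneg
  rw [hMw]
  refine (posSemidef_weightedSecondMoment (ae_of_all _ fun ω => sq_nonneg (x ω i))
    (hint4 i)).l2_opNorm_le (by positivity) fun u hu => ?_
  rw [dotProduct_weightedSecondMoment_mulVec (hint4 i)]
  calc ∫ ω, x ω i ^ 2 * (u ⬝ᵥ x ω) ^ 2 ∂μ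
      ≤ √(∫ ω, x ω i ^ 4 ∂μ) * √(∫ ω, (u ⬝ᵥ x ω) ^ 4 ∂μ) :=
        integral_sq_mul_sq_le (hx i) (memLp_finsetSum _ fun j _ => (hx j).const_mul (u j))
    _ ≤ (K * S i i) * (K * ‖S‖) :=
        mul_le_mul hcoord ((hreverse u hu).trans (mul_le_mul_of_nonneg_left
          (S.dotProduct_mulVec_le_l2_opNorm hu) (by positivity))) (Real.sqrt_nonneg _)
          (by positivity)
    _ = K ^ 2 * S i i * ‖S‖ := by ring

/-- If (i) `E[|uᵀx|^r]^{1/r} ≤ c ‖uᵀx‖_{Ψ₂} √r` for all unit `u` and `r ≥ 1`,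
and (ii) `c₀ ‖uᵀx‖_{Ψ₂}² ≤ E[(uᵀx)²]` for all `u`, then for every coordinate `i`,
`‖E[xᵢ² x xᵀ]‖ ≤ (4c²/c₀)² Σᵢᵢ ‖Σ‖` in operator norm, where `Σ = E[x xᵀ]`. -/
theorem fourth_moment_matrix_opNorm_bound {Ω : Type*} [MeasureSpace Ω]
    (μ : Measure Ω) [IsProbabilityMeasure μ] {n : ℕ}
    (x : Ω → Fin n → ℝ) (hxm : Measurable x)
    (c c₀ : ℝ) (hc : 0 < c) (hc₀ : 0 < c₀)
    (hmom : ∀ u : Fin n → ℝ, (∑ i, u i ^ 2 = 1) → ∀ r : ℝ, 1 ≤ r →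
      (∫ ω, |∑ i, u i * x ω i| ^ r ∂μ) ^ (1 / r)
        ≤ c * psi2Norm μ (fun ω => ∑ i, u i * x ω i) * Real.sqrt r)
    (hlow : ∀ u : Fin n → ℝ,
      c₀ * psi2Norm μ (fun ω => ∑ i, u i * x ω i) ^ 2
        ≤ ∫ ω, (∑ i, u i * x ω i) ^ 2 ∂μ)
    (S : Matrix (Fin n) (Fin n) ℝ)
    (hS : ∀ i j, S i j = ∫ ω, x ω i * x ω j ∂μ)
    (hint4 : ∀ i j l, Integrable (fun ω => x ω i ^ 2 * (x ω j * x ω l)) μ)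
    (i : Fin n)
    (M : Matrix (Fin n) (Fin n) ℝ)
    (hM : ∀ j l, M j l = ∫ ω, x ω i ^ 2 * (x ω j * x ω l) ∂μ) :
    ‖M‖ ≤ (4 * c ^ 2 / c₀) ^ 2 * S i i * ‖S‖ :=
  fourth_moment_matrix_opNorm_bound_general μ x hxm c c₀ hc₀ hmom hlow S hS hint4 i M hM
end

section
/- In the MCAR model with known P and stochastically dependent i.i.d. samples, the entrywise mean squared error of the estimator Σ̂_{ij} = (1/(N p_{ij})) Σ_k δᵢ^(k)δⱼ^(k) xᵢ^(k)xⱼ^(k) equals E[|Σ̂_{ij} − Σ_{ij}|²] = (Var(xᵢxⱼ) + (1 − p_{ij}) Σ_{ij}²)/(p_{ij} N). -/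
open MeasureTheory ProbabilityTheory

/-!
Each summand `d k * f k` has mean `p s` and, since `d k ^ 2 = d k`, second moment `p (V + s²)`.
The summands are pairwise independent and the estimator is unbiased, so its mean squared error
is its variance `N (p (V + s²) - p² s²) / (N p)²`.
-/

namespace ProbabilityTheory

section Masking

variable {Ω : Type*} [MeasurableSpace Ω] {μ : Measure Ω} {X Y : Ω → ℝ}

lemma memLp_of_forall_eq_zero_or_eq_one [IsFiniteMeasure μ] (hXm : AEStronglyMeasurable X μ)
    (hX : ∀ ω, X ω = 0 ∨ X ω = 1) (q : ENNReal) : MemLp X q μ :=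
  .of_bound hXm 1 (.of_forall fun ω => by rcases hX ω with h | h <;> simp [h])

lemma IndepFun.sq (h : X ⟂ᵢ[μ] Y) : (fun ω => X ω ^ 2) ⟂ᵢ[μ] fun ω => Y ω ^ 2 :=
  h.comp (measurable_id.pow_const 2) (measurable_id.pow_const 2)

lemma IndepFun.memLp_two_mul (h : X ⟂ᵢ[μ] Y) (hX : MemLp X 2 μ) (hY : MemLp Y 2 μ) :
    MemLp (X * Y) 2 μ := by
  rw [memLp_two_iff_integrable_sq (hX.aestronglyMeasurable.mul hY.aestronglyMeasurable)]
  simp only [Pi.mul_apply, mul_pow]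
  exact h.sq.integrable_mul hX.integrable_sq hY.integrable_sq

lemma IndepFun.variance_mul [IsProbabilityMeasure μ] (h : X ⟂ᵢ[μ] Y) (hX : MemLp X 2 μ)
    (hY : MemLp Y 2 μ) :
    Var[X * Y; μ] = (∫ ω, X ω ^ 2 ∂μ) * (∫ ω, Y ω ^ 2 ∂μ) - (μ[X] * μ[Y]) ^ 2 := by
  rw [variance_eq_sub (h.memLp_two_mul hX hY), h.integral_mul_eq_mul_integral
    hX.aestronglyMeasurable hY.aestronglyMeasurable]
  simp only [Pi.pow_apply, Pi.mul_apply, mul_pow]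
  rw [h.sq.integral_fun_mul_eq_mul_integral (hX.aestronglyMeasurable.pow 2)
    (hY.aestronglyMeasurable.pow 2)]

lemma IndepFun.variance_mul_of_forall_eq_zero_or_eq_one [IsProbabilityMeasure μ]
    (h : X ⟂ᵢ[μ] Y) (hXm : AEStronglyMeasurable X μ) (hX : ∀ ω, X ω = 0 ∨ X ω = 1)
    (hY : MemLp Y 2 μ) :
    Var[X * Y; μ] = μ[X] * (∫ ω, Y ω ^ 2 ∂μ) - (μ[X] * μ[Y]) ^ 2 := by
  have hX_sq : (fun ω => X ω ^ 2) = X := funext fun ω => by rcases hX ω with h | h <;> simp [h]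
  rw [h.variance_mul (memLp_of_forall_eq_zero_or_eq_one hXm hX 2) hY, hX_sq]

end Masking

lemma iIndepFun.indepFun_mul_sumElim {Ω ι β : Type*} [MeasurableSpace Ω] {μ : Measure Ω}
    [MeasurableSpace β] [Mul β] [MeasurableMul₂ β] {f d : ι → Ω → β}
    (h : iIndepFun (fun k : ι ⊕ ι => Sum.elim f d k) μ)
    (hf : ∀ k, Measurable (f k)) (hd : ∀ k, Measurable (d k)) :
    Pairwise fun k l => (d k * f k) ⟂ᵢ[μ] (d l * f l) := fun k l hkl =>
  h.indepFun_mul_mul (Sum.rec hf hd) (.inr k) (.inl k) (.inr l) (.inl l)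
    (by simpa using hkl) (by simp) (by simp) (by simpa using hkl)

end ProbabilityTheory

/-- In the MCAR model with known observation probability `p = p_{ij} > 0`,
writing `f k = xᵢ⁽ᵏ⁾xⱼ⁽ᵏ⁾` (i.i.d. with mean `s = Σ_{ij}` and variance `V`) and
`d k = δᵢ⁽ᵏ⁾δⱼ⁽ᵏ⁾` (Bernoulli(p), all 2N variables jointly independent),
the entrywise mean squared error of `Σ̂_{ij} = (1/(N p)) ∑ₖ d k · f k` equals
`(V + (1 − p) s²)/(p N)`. -/
theorem mcar_entrywise_mse {Ω : Type*} [MeasureSpace Ω]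
    (μ : Measure Ω) [IsProbabilityMeasure μ] {N : ℕ} (hN : 0 < N)
    (f d : Fin N → Ω → ℝ) (s V p : ℝ) (hp : 0 < p)
    -- joint independence of all the data products and all the Bernoulli variables
    (hindep : iIndepFun
      (fun k : Fin N ⊕ Fin N => Sum.elim f d k) μ)
    (hfm : ∀ k, Measurable (f k)) (hdm : ∀ k, Measurable (d k))
    (hd01 : ∀ k ω, d k ω = 0 ∨ d k ω = 1)
    (hdp : ∀ k, ∫ ω, d k ω ∂μ = p)
    (hfmean : ∀ k, ∫ ω, f k ω ∂μ = s)
    (hfsq : ∀ k, ∫ ω, f k ω ^ 2 ∂μ = V + s ^ 2)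
    (hfint : ∀ k, Integrable (fun ω => f k ω ^ 2) μ) :
    ∫ ω, ((1 / (N * p)) * ∑ k, d k ω * f k ω - s) ^ 2 ∂μ
      = (V + (1 - p) * s ^ 2) / (p * N) := by
  have hf : ∀ k, MemLp (f k) 2 μ := fun k =>
    (memLp_two_iff_integrable_sq (hfm k).aestronglyMeasurable).2 (hfint k)
  have hdf : ∀ k, d k ⟂ᵢ[μ] f k := fun k =>
    hindep.indepFun (i := .inr k) (j := .inl k) (by simp)
  have hmem : ∀ k, MemLp (d k * f k) 2 μ := fun k => (hdf k).memLp_two_mul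
    (memLp_of_forall_eq_zero_or_eq_one (hdm k).aestronglyMeasurable (hd01 k) 2) (hf k)
  have hmean : ∀ k, ∫ ω, d k ω * f k ω ∂μ = p * s := fun k => by
    rw [(hdf k).integral_fun_mul_eq_mul_integral (hdm k).aestronglyMeasurable
      (hfm k).aestronglyMeasurable, hdp, hfmean]
  have hvar : ∀ k, Var[d k * f k; μ] = p * (V + s ^ 2) - (p * s) ^ 2 := fun k => by
    rw [(hdf k).variance_mul_of_forall_eq_zero_or_eq_one (hdm k).aestronglyMeasurable (hd01 k)
      (hf k), hfsq, hdp, hfmean]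
  have hNp : (N : ℝ) * p ≠ 0 := mul_ne_zero (Nat.cast_ne_zero.2 hN.ne') hp.ne'
  have hunbiased : ∫ ω, (1 / (N * p)) * (∑ k, d k * f k) ω ∂μ = s := by
    simp only [Finset.sum_apply, Pi.mul_apply]
    rw [integral_const_mul, integral_finsetSum (f := fun k ω => d k ω * f k ω) _
      fun k _ => (hmem k).integrable one_le_two]
    simp only [hmean, Finset.sum_const, Finset.card_univ, Fintype.card_fin, nsmul_eq_mul]
    field_simp
  calc ∫ ω, ((1 / (N * p)) * ∑ k, d k ω * f k ω - s) ^ 2 ∂μ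
      = Var[fun ω => (1 / (N * p)) * (∑ k, d k * f k) ω; μ] := by
        rw [variance_eq_integral (by fun_prop), hunbiased]
        simp only [Finset.sum_apply, Pi.mul_apply]
    _ = (1 / (N * p)) ^ 2 * ∑ k, Var[d k * f k; μ] := by
        rw [variance_const_mul, IndepFun.variance_sum (fun k _ => hmem k)
          fun k _ l _ hkl => hindep.indepFun_mul_sumElim hfm hdm hkl]
    _ = (V + (1 - p) * s ^ 2) / (p * N) := by
        simp only [hvar, Finset.sum_const, Finset.card_univ, Fintype.card_fin, nsmul_eq_mul]
        field_simp
        ring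
end

section
/- In the MCAR model with unknown mean: under the assumptions that x^(k) are i.i.d. with mean μ, covariance Σ, and Δ independent of the data with all P̂_{ij} > 0 and the matrix Θ = N p̂ p̂ᵀ − P̂ entrywise positive, the estimator Σ̂ = R_y ⊙ Γ̂ − (N ȳ ȳᵀ − R_y) ⊙ Ψ, where R_y = (1/N) Σ_k y^(k)y^(k)ᵀ, Γ̂ is the entrywise inverse of P̂, and Ψ is the entrywise inverse of Θ, satisfies E[Σ̂ | Δ] = Σ. -/
/-! Conditionally on `Δ`, `Σ̂ᵢⱼ` is the mean of the products `x⁽ᵏ⁾ᵢ x⁽ᵏ⁾ⱼ` weighted by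
`δ⁽ᵏ⁾ᵢ δ⁽ᵏ⁾ⱼ` (total weight `N P̂ᵢⱼ`), minus the mean of the products `x⁽ᵏ⁾ᵢ x⁽ˡ⁾ⱼ`, `k ≠ l`,
weighted by `δ⁽ᵏ⁾ᵢ δ⁽ˡ⁾ⱼ` (total weight `N Θᵢⱼ`). The weights are functions of `Δ`, which is
independent of the data, so conditioning replaces each product by its expectation:
`Σᵢⱼ + μᵢ μⱼ` on the diagonal and, the samples being independent, `μᵢ μⱼ` off it. -/

open MeasureTheory ProbabilityTheory Finset

theorem Finset.sum_mul_sum_eq_sum_add_sum_offDiag {ι R : Type*} [DecidableEq ι]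
    [NonUnitalNonAssocSemiring R] (s : Finset ι) (f g : ι → R) :
    (∑ i ∈ s, f i) * ∑ i ∈ s, g i = ∑ i ∈ s, f i * g i + ∑ p ∈ s.offDiag, f p.1 * g p.2 := by
  rw [sum_mul_sum, ← sum_product', ← diag_union_offDiag, sum_union (disjoint_diag_offDiag s),
    sum_diag]

theorem natCast_mul_mean_mul_mean_sub_mean_mul {N : ℕ} (hN : N ≠ 0) (f g : Fin N → ℝ) :
    N * ((N : ℝ)⁻¹ * ∑ k, f k) * ((N : ℝ)⁻¹ * ∑ k, g k) - (N : ℝ)⁻¹ * ∑ k, f k * g k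
      = (N : ℝ)⁻¹ * ∑ p ∈ univ.offDiag, f p.1 * g p.2 := by
  have hN' : (N : ℝ) ≠ 0 := Nat.cast_ne_zero.2 hN
  rw [eq_inv_mul_iff_mul_eq₀ hN', ← add_sub_cancel_left (∑ k, f k * g k)
    (∑ p ∈ univ.offDiag, f p.1 * g p.2), ← sum_mul_sum_eq_sum_add_sum_offDiag]
  field_simp

noncomputable def weightedMean {ι : Type*} (s : Finset ι) (w X : ι → ℝ) : ℝ :=
  (∑ p ∈ s, w p * X p) / ∑ p ∈ s, w p

theorem weightedMean_eq_sum {ι : Type*} (s : Finset ι) (w X : ι → ℝ) :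
    weightedMean s w X = ∑ p ∈ s, w p / (∑ q ∈ s, w q) * X p := by
  rw [weightedMean, sum_div]
  exact sum_congr rfl fun p _ => mul_div_right_comm _ _ _

theorem abs_div_sum_le_one {ι : Type*} {s : Finset ι} {w : ι → ℝ} (hw : ∀ p ∈ s, 0 ≤ w p)
    {p : ι} (hp : p ∈ s) : |w p / ∑ q ∈ s, w q| ≤ 1 := by
  rw [abs_of_nonneg (div_nonneg (hw p hp) (sum_nonneg hw))]
  exact div_le_one_of_le₀ (single_le_sum hw hp) (sum_nonneg hw)

theorem weightedMean_diag_sub_weightedMean_offDiag {N : ℕ} (hN : N ≠ 0) (u v f g : Fin N → ℝ) :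
    weightedMean univ.diag (fun p => u p.1 * v p.2) (fun p => f p.1 * g p.2)
        - weightedMean univ.offDiag (fun p => u p.1 * v p.2) (fun p => f p.1 * g p.2)
      = ((N : ℝ)⁻¹ * ∑ k, u k * f k * (v k * g k)) * ((N : ℝ)⁻¹ * ∑ k, u k * v k)⁻¹
        - (N * ((N : ℝ)⁻¹ * ∑ k, u k * f k) * ((N : ℝ)⁻¹ * ∑ k, v k * g k)
          - (N : ℝ)⁻¹ * ∑ k, u k * f k * (v k * g k))
          * (N * ((N : ℝ)⁻¹ * ∑ k, u k) * ((N : ℝ)⁻¹ * ∑ k, v k)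
            - (N : ℝ)⁻¹ * ∑ k, u k * v k)⁻¹ := by
  have hN' : (N : ℝ)⁻¹ ≠ 0 := inv_ne_zero (Nat.cast_ne_zero.2 hN)
  rw [natCast_mul_mean_mul_mean_sub_mean_mul hN, natCast_mul_mean_mul_mean_sub_mean_mul hN]
  simp only [weightedMean, sum_diag, ← div_eq_mul_inv, mul_div_mul_left _ _ hN']
  congr 2 <;> refine sum_congr rfl fun _ _ => by ring

section Conditioning

variable {Ω ι : Type*} {m₁ m₂ : MeasurableSpace Ω} [mΩ : MeasurableSpace Ω] {μ : Measure Ω}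

theorem condExp_mul_of_indep [IsFiniteMeasure μ] (hm₁ : m₁ ≤ mΩ) (hm₂ : m₂ ≤ mΩ)
    (hind : Indep m₁ m₂ μ) {c X : Ω → ℝ} {C : ℝ} (hc : Measurable[m₂] c) (hcC : ∀ ω, |c ω| ≤ C)
    (hX : Measurable[m₁] X) (hXi : Integrable X μ) :
    μ[fun ω => c ω * X ω | m₂] =ᵐ[μ] fun ω => c ω * ∫ ω', X ω' ∂μ := by
  have hcX : Integrable (c * X) μ :=
    hXi.bdd_mul ((hc.mono hm₂ le_rfl).aestronglyMeasurable) (.of_forall hcC)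
  filter_upwards [condExp_mul_of_stronglyMeasurable_left hc.stronglyMeasurable hcX hXi,
    condExp_indep_eq hm₁ hm₂ hX.stronglyMeasurable hind] with ω hω hω'
  rw [Pi.mul_apply] at hω
  exact hω.trans (by rw [hω'])

theorem integrable_weightedMean {s : Finset ι} {w X : ι → Ω → ℝ}
    (hw : ∀ p ∈ s, Measurable (w p)) (hw0 : ∀ p ∈ s, ∀ ω, 0 ≤ w p ω)
    (hX : ∀ p ∈ s, Integrable (X p) μ) :
    Integrable (fun ω => weightedMean s (w · ω) (X · ω)) μ := by
  simp_rw [weightedMean_eq_sum]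
  refine integrable_finsetSum s fun p hp => (hX p hp).bdd_mul ?_
    (.of_forall fun ω => (abs_div_sum_le_one (hw0 · · ω) hp))
  exact ((hw p hp).div (s.measurable_sum hw)).aestronglyMeasurable

theorem condExp_weightedMean_of_indep [IsFiniteMeasure μ] (hm₁ : m₁ ≤ mΩ) (hm₂ : m₂ ≤ mΩ)
    (hind : Indep m₁ m₂ μ) {s : Finset ι} {w X : ι → Ω → ℝ} {a : ℝ}
    (hw : ∀ p ∈ s, Measurable[m₂] (w p)) (hw0 : ∀ p ∈ s, ∀ ω, 0 ≤ w p ω)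
    (hwpos : ∀ ω, 0 < ∑ p ∈ s, w p ω) (hX : ∀ p ∈ s, Measurable[m₁] (X p))
    (hXi : ∀ p ∈ s, Integrable (X p) μ) (hmean : ∀ p ∈ s, ∫ ω, X p ω ∂μ = a) :
    μ[fun ω => weightedMean s (w · ω) (X · ω) | m₂] =ᵐ[μ] fun _ => a := by
  have hwm : ∀ p ∈ s, Measurable[m₂] fun ω => w p ω / ∑ q ∈ s, w q ω :=
    fun p hp => (hw p hp).div (s.measurable_sum hw)
  have hwb : ∀ p ∈ s, ∀ ω, |w p ω / ∑ q ∈ s, w q ω| ≤ 1 :=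
    fun p hp ω => abs_div_sum_le_one (hw0 · · ω) hp
  have hterm : ∀ p ∈ s, μ[fun ω => w p ω / (∑ q ∈ s, w q ω) * X p ω | m₂]
      =ᵐ[μ] fun ω => w p ω / (∑ q ∈ s, w q ω) * a := fun p hp => by
    simpa only [hmean p hp] using
      condExp_mul_of_indep hm₁ hm₂ hind (hwm p hp) (hwb p hp) (hX p hp) (hXi p hp)
  have hsum := condExp_finsetSum (μ := μ) (m := m₂)
    (f := fun p ω => w p ω / (∑ q ∈ s, w q ω) * X p ω) fun p hp => (hXi p hp).bdd_mul
      ((hwm p hp).mono hm₂ le_rfl).aestronglyMeasurable (.of_forall (hwb p hp))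
  rw [sum_fn] at hsum
  simp_rw [weightedMean_eq_sum]
  filter_upwards [hsum, (Filter.eventually_all_finset s).2 hterm] with ω hω hω'
  rw [hω, Finset.sum_apply, sum_congr rfl hω', ← sum_mul, ← sum_div, div_self (hwpos ω).ne',
    one_mul]

theorem condExp_weightedMean_sub_weightedMean_of_indep [IsFiniteMeasure μ] (hm₁ : m₁ ≤ mΩ)
    (hm₂ : m₂ ≤ mΩ) (hind : Indep m₁ m₂ μ) {w X : ι → Ω → ℝ} (hw : ∀ p, Measurable[m₂] (w p))
    (hw0 : ∀ p ω, 0 ≤ w p ω) (hX : ∀ p, Measurable[m₁] (X p)) (hXi : ∀ p, Integrable (X p) μ)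
    {s t : Finset ι} {a b : ℝ} (hs : ∀ ω, 0 < ∑ p ∈ s, w p ω) (ht : ∀ ω, 0 < ∑ p ∈ t, w p ω)
    (ha : ∀ p ∈ s, ∫ ω, X p ω ∂μ = a) (hb : ∀ p ∈ t, ∫ ω, X p ω ∂μ = b) :
    μ[fun ω => weightedMean s (w · ω) (X · ω) - weightedMean t (w · ω) (X · ω) | m₂]
      =ᵐ[μ] fun _ => a - b := by
  have hint : ∀ u : Finset ι, Integrable (fun ω => weightedMean u (w · ω) (X · ω)) μ := fun u =>
    integrable_weightedMean (fun p _ => (hw p).mono hm₂ le_rfl) (fun p _ => hw0 p) fun p _ => hXi p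
  have hcond : ∀ (u : Finset ι) (c : ℝ), (∀ ω, 0 < ∑ p ∈ u, w p ω) →
      (∀ p ∈ u, ∫ ω, X p ω ∂μ = c) →
      μ[fun ω => weightedMean u (w · ω) (X · ω) | m₂] =ᵐ[μ] fun _ => c := fun u c hu hc =>
    condExp_weightedMean_of_indep hm₁ hm₂ hind (fun p _ => hw p) (fun p _ => hw0 p) hu
      (fun p _ => hX p) (fun p _ => hXi p) hc
  filter_upwards [condExp_sub (hint s) (hint t) m₂, hcond s a hs ha, hcond t b ht hb]
    with ω h hs ht
  exact h.trans (by rw [Pi.sub_apply, hs, ht])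

end Conditioning

section Moments

variable {Ω : Type*} [MeasurableSpace Ω] {μ : Measure Ω}

theorem memLp_two_of_integrable_mul_self {X : Ω → ℝ} (hX : AEStronglyMeasurable X μ)
    (hXX : Integrable (fun ω => X ω * X ω) μ) : MemLp X 2 μ :=
  (memLp_two_iff_integrable_sq hX).2 (by simpa only [sq] using hXX)

theorem integral_mul_eq_integral_centered_mul_add [IsProbabilityMeasure μ] {X Y : Ω → ℝ}
    {a b : ℝ} (hX : MemLp X 2 μ) (hY : MemLp Y 2 μ) (ha : ∫ ω, X ω ∂μ = a)
    (hb : ∫ ω, Y ω ∂μ = b) :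
    ∫ ω, X ω * Y ω ∂μ = ∫ ω, (X ω - a) * (Y ω - b) ∂μ + a * b := by
  have h := covariance_eq_sub hX hY
  rw [covariance, ha, hb] at h
  rw [h, Pi.mul_def, sub_add_cancel]

theorem ProbabilityTheory.iIndepFun.integral_apply_mul_apply {ι κ : Type*} {x : ι → Ω → κ → ℝ}
    (hx : iIndepFun x μ) (hxm : ∀ k, Measurable (x k)) {k l : ι} (hkl : k ≠ l) (a b : κ) :
    ∫ ω, x k ω a * x l ω b ∂μ = (∫ ω, x k ω a ∂μ) * ∫ ω, x l ω b ∂μ :=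
  ((hx.indepFun hkl).comp (measurable_pi_apply a)
    (measurable_pi_apply b)).integral_fun_mul_eq_mul_integral
    ((measurable_pi_apply a).comp (hxm k)).aestronglyMeasurable
    ((measurable_pi_apply b).comp (hxm l)).aestronglyMeasurable

end Moments

/-- MCAR with unknown mean. With `y⁽ᵏ⁾ = δ⁽ᵏ⁾ ⊙ x⁽ᵏ⁾`, `x⁽ᵏ⁾` i.i.d.
(mean `μv`, covariance `S`), `Δ` independent of the data, all `P̂ ω i j > 0` and all
`Θ ω i j = N p̂ᵢ p̂ⱼ − P̂ᵢⱼ > 0`, the estimator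
`Σ̂ = R_y ⊙ Γ̂ − (N ȳ ȳᵀ − R_y) ⊙ Ψ` (with `Γ̂ = P̂^{⊙-1}`, `Ψ = Θ^{⊙-1}`) satisfies
`E[Σ̂ | Δ] = S` a.e., entrywise. -/
theorem mcar_unknown_mean_unbiased {Ω : Type*} [MeasureSpace Ω]
    (μ : Measure Ω) [IsProbabilityMeasure μ] {n N : ℕ} (hN : 0 < N)
    (x δ : Fin N → Ω → Fin n → ℝ) (μv : Fin n → ℝ)
    (S : Matrix (Fin n) (Fin n) ℝ)
    (hxm : ∀ k, Measurable (x k)) (hδm : ∀ k, Measurable (δ k))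
    (hind : IndepFun (fun ω k => x k ω) (fun ω k => δ k ω) μ)
    (hiid : iIndepFun x μ)
    (hδ01 : ∀ k ω i, δ k ω i = 0 ∨ δ k ω i = 1)
    (hmean : ∀ k i, ∫ ω, x k ω i ∂μ = μv i)
    (hcov : ∀ k i j, ∫ ω, (x k ω i - μv i) * (x k ω j - μv j) ∂μ = S i j)
    (hint : ∀ k l i j, Integrable (fun ω => x k ω i * x l ω j) μ)
    -- empirical quantities
    (Phat : Ω → Matrix (Fin n) (Fin n) ℝ)
    (hPhat : ∀ ω i j, Phat ω i j = (N : ℝ)⁻¹ * ∑ k, δ k ω i * δ k ω j)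
    (phat : Ω → Fin n → ℝ)
    (hphat : ∀ ω i, phat ω i = (N : ℝ)⁻¹ * ∑ k, δ k ω i)
    (Θ : Ω → Matrix (Fin n) (Fin n) ℝ)
    (hΘ : ∀ ω i j, Θ ω i j = (N : ℝ) * phat ω i * phat ω j - Phat ω i j)
    (hPhatpos : ∀ ω i j, 0 < Phat ω i j)
    (hΘpos : ∀ ω i j, 0 < Θ ω i j)
    (Ry : Ω → Matrix (Fin n) (Fin n) ℝ)
    (hRy : ∀ ω i j, Ry ω i j =
      (N : ℝ)⁻¹ * ∑ k, (δ k ω i * x k ω i) * (δ k ω j * x k ω j))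
    (ybar : Ω → Fin n → ℝ)
    (hybar : ∀ ω i, ybar ω i = (N : ℝ)⁻¹ * ∑ k, δ k ω i * x k ω i) :
    ∀ i j,
      (μ[fun ω => Ry ω i j * (Phat ω i j)⁻¹
          - ((N : ℝ) * (ybar ω i * ybar ω j) - Ry ω i j) * (Θ ω i j)⁻¹
        | MeasurableSpace.comap (fun ω (k : Fin N) => δ k ω) inferInstance])
      =ᵐ[μ] fun _ => S i j := by
  intro i j
  set D : Fin N × Fin N → Ω → ℝ := fun p ω => δ p.1 ω i * δ p.2 ω j
  set X : Fin N × Fin N → Ω → ℝ := fun p ω => x p.1 ω i * x p.2 ω j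
  have hest : ∀ ω, Ry ω i j * (Phat ω i j)⁻¹
      - ((N : ℝ) * (ybar ω i * ybar ω j) - Ry ω i j) * (Θ ω i j)⁻¹
      = weightedMean univ.diag (D · ω) (X · ω) - weightedMean univ.offDiag (D · ω) (X · ω) :=
    fun ω => by
      rw [hRy, hΘ, hPhat, hphat, hphat, hybar, hybar, ← mul_assoc]
      exact (weightedMean_diag_sub_weightedMean_offDiag hN.ne' (δ · ω i) (δ · ω j) (x · ω i)
        (x · ω j)).symm
  have hmean_diag : ∀ p ∈ univ.diag, ∫ ω, X p ω ∂μ = S i j + μv i * μv j := by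
    rintro ⟨k, l⟩ hp
    obtain rfl : k = l := (mem_diag.1 hp).2
    have hL2 : ∀ a, MemLp (fun ω => x k ω a) 2 μ := fun a => memLp_two_of_integrable_mul_self
      ((measurable_pi_apply a).comp (hxm k)).aestronglyMeasurable (hint k k a a)
    rw [integral_mul_eq_integral_centered_mul_add (hL2 i) (hL2 j) (hmean k i) (hmean k j), hcov]
  have hmean_offDiag : ∀ p ∈ univ.offDiag, ∫ ω, X p ω ∂μ = μv i * μv j := fun p hp => by
    rw [hiid.integral_apply_mul_apply hxm (mem_offDiag.1 hp).2.2, hmean, hmean]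
  have hpos_diag : ∀ ω, 0 < ∑ p ∈ univ.diag, D p ω := fun ω =>
    sum_diag univ (D · ω) ▸ pos_of_mul_pos_right (hPhat ω i j ▸ hPhatpos ω i j) (by positivity)
  have hpos_offDiag : ∀ ω, 0 < ∑ p ∈ univ.offDiag, D p ω := fun ω => by
    have h := hΘpos ω i j
    rw [hΘ, hPhat, hphat, hphat, natCast_mul_mean_mul_mean_sub_mean_mul hN.ne'] at h
    exact pos_of_mul_pos_right h (by positivity)
  have hD0 : ∀ p ω, 0 ≤ D p ω := fun p ω => by
    rcases hδ01 p.1 ω i with h | h <;> rcases hδ01 p.2 ω j with h' | h' <;> simp [D, h, h']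
  have hprod : ∀ p : Fin N × Fin N, Measurable fun v : Fin N → Fin n → ℝ => v p.1 i * v p.2 j :=
    fun p => by fun_prop
  simp_rw [hest]
  simpa only [add_sub_cancel_right] using
    condExp_weightedMean_sub_weightedMean_of_indep (w := D) (X := X)
      (measurable_pi_lambda _ hxm).comap_le (measurable_pi_lambda _ hδm).comap_le hind
      (fun p => (hprod p).comp (comap_measurable _)) hD0
      (fun p => (hprod p).comp (comap_measurable _)) (fun p => hint _ _ i j)
      hpos_diag hpos_offDiag hmean_diag hmean_offDiag
end

section
/- Let x^(k) be i.i.d. with mean μ and covariance Σ, δ^(k) i.i.d. 0-1 vectors independent of the data with E[δ] = p and E[δδᵀ] = P, and y^(k) = δ^(k) ⊙ x^(k). Then with ȳ = (1/N)Σ_k y^(k) and R_y = (1/N)Σ_k y^(k)y^(k)ᵀ, one has E[N² ȳ ȳᵀ − N R_y] = N(N−1) · (p pᵀ ⊙ μ μᵀ); consequently (1/(N−1))(N ȳȳᵀ − R_y) ⊙ γγᵀ, with γ the entrywise inverse of p, is an unbiased estimator of μμᵀ. -/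
/-! With yᵏ = δᵏ ⊙ xᵏ, the quantity N² ȳᵢȳⱼ − N (R_y)ᵢⱼ = (∑ₖ yᵢᵏ)(∑ₗ yⱼˡ) − ∑ₖ yᵢᵏyⱼᵏ is the sum of
the N(N − 1) off-diagonal products yᵢᵏyⱼˡ, k ≠ l. Distinct samples are independent, so each such
product has mean E[yᵢ] E[yⱼ], and E[yᵢ] = pᵢμᵢ because the mask is independent of the data. -/

open MeasureTheory ProbabilityTheory Finset

theorem Finset.sum_mul_sum_sub_sum_mul {ι R : Type*} [CommRing R] [DecidableEq ι]
    (s : Finset ι) (f g : ι → R) :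
    (∑ k ∈ s, f k) * (∑ l ∈ s, g l) - ∑ k ∈ s, f k * g k
      = ∑ k ∈ s, ∑ l ∈ s.erase k, f k * g l := by
  rw [sum_mul_sum, ← sum_sub_distrib]
  refine sum_congr rfl fun k hk => ?_
  rw [sum_erase_eq_sub hk]

section

variable {Ω ι κ : Type*} [MeasurableSpace Ω] {μ : Measure Ω}

theorem integral_sum_mul_sum_sub_sum_mul [Fintype ι] {Y Z : ι → Ω → ℝ} {a b : ℝ}
    (hY : ∀ k, AEStronglyMeasurable (Y k) μ) (hZ : ∀ l, AEStronglyMeasurable (Z l) μ)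
    (hYZ : ∀ k l, Integrable (fun ω => Y k ω * Z l ω) μ)
    (hindep : Pairwise fun k l => IndepFun (Y k) (Z l) μ)
    (hYa : ∀ k, ∫ ω, Y k ω ∂μ = a) (hZb : ∀ l, ∫ ω, Z l ω ∂μ = b) :
    ∫ ω, (∑ k, Y k ω) * (∑ l, Z l ω) - ∑ k, Y k ω * Z k ω ∂μ
      = Fintype.card ι * (Fintype.card ι - 1) * (a * b) := by
  classical
  have hoff : ∀ k, ∫ ω, ∑ l ∈ univ.erase k, Y k ω * Z l ω ∂μ
      = (Fintype.card ι - 1) * (a * b) := by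
    intro k
    have hprod : ∀ l ∈ univ.erase k, ∫ ω, Y k ω * Z l ω ∂μ = a * b := fun l hl => by
      rw [(hindep (ne_of_mem_erase hl).symm).integral_fun_mul_eq_mul_integral (hY k) (hZ l),
        hYa, hZb]
    rw [integral_finsetSum _ fun l _ => hYZ k l, sum_congr rfl hprod, sum_const,
      card_erase_of_mem (mem_univ k), card_univ, nsmul_eq_mul,
      Nat.cast_pred (Fintype.card_pos_iff.mpr ⟨k⟩)]
  simp_rw [sum_mul_sum_sub_sum_mul]
  rw [integral_finsetSum _ fun k _ => integrable_finsetSum _ fun l _ => hYZ k l]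
  simp only [hoff, sum_const, card_univ, nsmul_eq_mul]
  ring

theorem ProbabilityTheory.IndepFun.integral_apply_mul_apply {κ' : Type*} {D : Ω → κ' → ℝ}
    {X : Ω → κ → ℝ} (h : IndepFun D X μ) (hD : Measurable D) (hX : Measurable X)
    (i : κ') (j : κ) :
    ∫ ω, D ω i * X ω j ∂μ = (∫ ω, D ω i ∂μ) * ∫ ω, X ω j ∂μ :=
  (h.comp (measurable_pi_apply i) (measurable_pi_apply j)).integral_fun_mul_eq_mul_integral
    (measurable_pi_iff.mp hD i).aestronglyMeasurable
    (measurable_pi_iff.mp hX j).aestronglyMeasurable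

theorem MeasureTheory.Integrable.zero_one_mul_mul_zero_one_mul {d e f g : Ω → ℝ}
    (hd : ∀ ω, d ω = 0 ∨ d ω = 1) (he : ∀ ω, e ω = 0 ∨ e ω = 1)
    (hdm : AEStronglyMeasurable d μ) (hem : AEStronglyMeasurable e μ)
    (hfg : Integrable (fun ω => f ω * g ω) μ) :
    Integrable (fun ω => d ω * f ω * (e ω * g ω)) μ := by
  have hde : ∀ ω, ‖d ω * e ω‖ ≤ 1 := fun ω => by
    rcases hd ω with h | h <;> rcases he ω with h' | h' <;> simp [h, h']
  exact (hfg.bdd_mul (hdm.mul hem) (.of_forall hde)).congr (.of_forall fun ω => by simp; ring)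

theorem ProbabilityTheory.iIndepFun.indepFun_mask_mul {x δ : ι → Ω → κ → ℝ}
    (h : iIndepFun (fun k ω => (x k ω, δ k ω)) μ) {k l : ι} (hkl : k ≠ l) (i j : κ) :
    IndepFun (fun ω => δ k ω i * x k ω i) (fun ω => δ l ω j * x l ω j) μ :=
  (h.indepFun hkl).comp (φ := fun q : (κ → ℝ) × (κ → ℝ) => q.2 i * q.1 i)
    (ψ := fun q : (κ → ℝ) × (κ → ℝ) => q.2 j * q.1 j) (by fun_prop) (by fun_prop)

theorem integral_masked_sum_mul_sum_sub_sum_mul [Fintype ι] {x δ : ι → Ω → κ → ℝ}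
    {m p : κ → ℝ} (hxm : ∀ k, Measurable (x k)) (hδm : ∀ k, Measurable (δ k))
    (hiid : iIndepFun (fun k ω => (x k ω, δ k ω)) μ) (hind : ∀ k, IndepFun (x k) (δ k) μ)
    (hδ01 : ∀ k ω i, δ k ω i = 0 ∨ δ k ω i = 1) (hδp : ∀ k i, ∫ ω, δ k ω i ∂μ = p i)
    (hmean : ∀ k i, ∫ ω, x k ω i ∂μ = m i)
    (hint : ∀ k l i j, Integrable (fun ω => x k ω i * x l ω j) μ) (i j : κ) :
    ∫ ω, (∑ k, δ k ω i * x k ω i) * (∑ l, δ l ω j * x l ω j)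
        - ∑ k, δ k ω i * x k ω i * (δ k ω j * x k ω j) ∂μ
      = Fintype.card ι * (Fintype.card ι - 1) * (p i * m i * (p j * m j)) := by
  have hδi : ∀ k i, Measurable fun ω => δ k ω i := fun k => measurable_pi_iff.mp (hδm k)
  have hy : ∀ k i, AEStronglyMeasurable (fun ω => δ k ω i * x k ω i) μ := fun k i =>
    ((hδi k i).mul (measurable_pi_iff.mp (hxm k) i)).aestronglyMeasurable
  have hy_mean : ∀ k i, ∫ ω, δ k ω i * x k ω i ∂μ = p i * m i := fun k i => by
    rw [(hind k).symm.integral_apply_mul_apply (hδm k) (hxm k), hδp, hmean]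
  exact integral_sum_mul_sum_sub_sum_mul (hy · i) (hy · j)
    (fun k l => .zero_one_mul_mul_zero_one_mul (hδ01 k · i) (hδ01 l · j)
      (hδi k i).aestronglyMeasurable (hδi l j).aestronglyMeasurable (hint k l i j))
    (fun k l hkl => hiid.indepFun_mask_mul hkl i j) (hy_mean · i) (hy_mean · j)

end

theorem mean_outer_unbiased_general {Ω : Type*} [MeasureSpace Ω]
    (μ : Measure Ω) [IsProbabilityMeasure μ] {n N : ℕ} (hN : 1 < N)
    (x δ : Fin N → Ω → Fin n → ℝ) (μv p : Fin n → ℝ)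
    (hxm : ∀ k, Measurable (x k)) (hδm : ∀ k, Measurable (δ k))
    -- the pairs (x⁽ᵏ⁾, δ⁽ᵏ⁾) are jointly independent across k
    (hiid : iIndepFun (fun k ω => (x k ω, δ k ω)) μ)
    -- within each k, the missing-data pattern is independent of the data
    (hind : ∀ k, IndepFun (x k) (δ k) μ)
    (hδ01 : ∀ k ω i, δ k ω i = 0 ∨ δ k ω i = 1)
    (hδp : ∀ k i, ∫ ω, δ k ω i ∂μ = p i)
    (hppos : ∀ i, 0 < p i)
    (hmean : ∀ k i, ∫ ω, x k ω i ∂μ = μv i)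
    (hint : ∀ k l i j, Integrable (fun ω => x k ω i * x l ω j) μ) :
    (∀ i j, ∫ ω,
        ((N : ℝ) ^ 2 * (((N : ℝ)⁻¹ * ∑ k, δ k ω i * x k ω i) *
            ((N : ℝ)⁻¹ * ∑ k, δ k ω j * x k ω j))
          - (N : ℝ) * ((N : ℝ)⁻¹ * ∑ k, (δ k ω i * x k ω i) * (δ k ω j * x k ω j))) ∂μ
        = (N : ℝ) * ((N : ℝ) - 1) * (p i * p j * (μv i * μv j))) ∧
    (∀ i j, ∫ ω,
        (1 / ((N : ℝ) - 1)) *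
          ((N : ℝ) * (((N : ℝ)⁻¹ * ∑ k, δ k ω i * x k ω i) *
              ((N : ℝ)⁻¹ * ∑ k, δ k ω j * x k ω j))
            - (N : ℝ)⁻¹ * ∑ k, (δ k ω i * x k ω i) * (δ k ω j * x k ω j)) *
          ((p i)⁻¹ * (p j)⁻¹) ∂μ
        = μv i * μv j) := by
  have key (i j) :=
    integral_masked_sum_mul_sum_sub_sum_mul hxm hδm hiid hind hδ01 hδp hmean hint i j
  simp only [Fintype.card_fin] at key
  have hN0 : (N : ℝ) ≠ 0 := by positivity
  have hN1 : (N : ℝ) - 1 ≠ 0 := sub_ne_zero.mpr (by exact_mod_cast hN.ne')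
  refine ⟨fun i j => ?_, fun i j => ?_⟩
  · have hscale : ∀ A B C : ℝ,
        (N : ℝ) ^ 2 * (((N : ℝ)⁻¹ * A) * ((N : ℝ)⁻¹ * B)) - N * ((N : ℝ)⁻¹ * C) = A * B - C :=
      fun A B C => by field_simp
    simp_rw [hscale, key]
    ring
  · have hscale : ∀ A B C : ℝ,
        1 / ((N : ℝ) - 1) * (N * (((N : ℝ)⁻¹ * A) * ((N : ℝ)⁻¹ * B)) - (N : ℝ)⁻¹ * C)
          * ((p i)⁻¹ * (p j)⁻¹) = (N * (N - 1) * (p i * p j))⁻¹ * (A * B - C) :=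
      fun A B C => by field_simp
    have := (hppos i).ne'
    have := (hppos j).ne'
    simp_rw [hscale]
    rw [integral_const_mul, key]
    field_simp

/-- With `x⁽ᵏ⁾` i.i.d. (mean `μv`, covariance `S`), `δ⁽ᵏ⁾` i.i.d. 0-1 vectors
independent of the data with `E[δ] = p`, `E[δδᵀ] = P`, and `y⁽ᵏ⁾ = δ⁽ᵏ⁾ ⊙ x⁽ᵏ⁾`:
`E[N² ȳ ȳᵀ − N R_y] = N(N−1)(p pᵀ ⊙ μv μvᵀ)` entrywise, and consequently
`(1/(N−1))(N ȳȳᵀ − R_y) ⊙ γγᵀ` is an unbiased estimator for `μv μvᵀ`. -/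
theorem mean_outer_unbiased {Ω : Type*} [MeasureSpace Ω]
    (μ : Measure Ω) [IsProbabilityMeasure μ] {n N : ℕ} (hN : 1 < N)
    (x δ : Fin N → Ω → Fin n → ℝ) (μv p : Fin n → ℝ)
    (S P : Matrix (Fin n) (Fin n) ℝ)
    (hxm : ∀ k, Measurable (x k)) (hδm : ∀ k, Measurable (δ k))
    -- the pairs (x⁽ᵏ⁾, δ⁽ᵏ⁾) are jointly independent across k
    (hiid : iIndepFun (fun k ω => (x k ω, δ k ω)) μ)
    -- within each k, the missing-data pattern is independent of the data
    (hind : ∀ k, IndepFun (x k) (δ k) μ)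
    (hδ01 : ∀ k ω i, δ k ω i = 0 ∨ δ k ω i = 1)
    (hδp : ∀ k i, ∫ ω, δ k ω i ∂μ = p i)
    (hppos : ∀ i, 0 < p i)
    (hP : ∀ k i j, ∫ ω, δ k ω i * δ k ω j ∂μ = P i j)
    (hmean : ∀ k i, ∫ ω, x k ω i ∂μ = μv i)
    (hcov : ∀ k i j, ∫ ω, (x k ω i - μv i) * (x k ω j - μv j) ∂μ = S i j)
    (hint : ∀ k l i j, Integrable (fun ω => x k ω i * x l ω j) μ) :
    (∀ i j, ∫ ω,
        ((N : ℝ) ^ 2 * (((N : ℝ)⁻¹ * ∑ k, δ k ω i * x k ω i) *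
            ((N : ℝ)⁻¹ * ∑ k, δ k ω j * x k ω j))
          - (N : ℝ) * ((N : ℝ)⁻¹ * ∑ k, (δ k ω i * x k ω i) * (δ k ω j * x k ω j))) ∂μ
        = (N : ℝ) * ((N : ℝ) - 1) * (p i * p j * (μv i * μv j))) ∧
    (∀ i j, ∫ ω,
        (1 / ((N : ℝ) - 1)) *
          ((N : ℝ) * (((N : ℝ)⁻¹ * ∑ k, δ k ω i * x k ω i) *
              ((N : ℝ)⁻¹ * ∑ k, δ k ω j * x k ω j))
            - (N : ℝ)⁻¹ * ∑ k, (δ k ω i * x k ω i) * (δ k ω j * x k ω j)) *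
          ((p i)⁻¹ * (p j)⁻¹) ∂μ
        = μv i * μv j) :=
  mean_outer_unbiased_general μ hN x δ μv p hxm hδm hiid hind hδ01 hδp hppos hmean hint
end
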